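/- Double exchange of jumps: let (Γ, λ) be a proof net with ⊥-occurrences a, b, c, d such that every switching graph contains a path of the form λ(a) –(jump of a)– a – ⋯ – b –(jump of b)– λ(b) – ⋯ – λ(c) –(jump of c)– c – ⋯ – d –(jump of d)– λ(d). Then λ is equivalent (under the rewiring-generated equivalence) to the linking λ[a ↦ λ(b)][b ↦ λ(a)][c ↦ λ(d)][d ↦ λ(c)] obtained by simultaneously swapping the targets of a and b and the targets of c and d. -/

import Mathlib

namespace MLL

/-- Formulas of unit-only MLL, with every connective and unit occurrence
carrying a name (a natural number). -/
inductive Formula : Type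
  | one : ℕ → Formula
  | bot : ℕ → Formula
  | parr : ℕ → Formula → Formula → Formula
  | tens : ℕ → Formula → Formula → Formula
deriving DecidableEq

namespace Formula

/-- The name of the root connective/unit of a formula. -/
def name : Formula → ℕ
  | one n => n
  | bot n => n
  | parr n _ _ => n
  | tens n _ _ => n

/-- All names occurring in a formula. -/
def names : Formula → Finset ℕ
  | one n => {n}
  | bot n => {n}
  | parr n A B => insert n (A.names ∪ B.names)
  | tens n A B => insert n (A.names ∪ B.names)

/-- All subformula occurrences of a formula. -/
def subs : Formula → List Formula
  | one n => [one n]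
  | bot n => [bot n]
  | parr n A B => parr n A B :: (A.subs ++ B.subs)
  | tens n A B => tens n A B :: (A.subs ++ B.subs)

end Formula

/-- A sequent is a multiset of (named) formulas. -/
abbrev Sequent := Multiset Formula

/-- The names occurring in a sequent. -/
def seqNames (Γ : Sequent) : Finset ℕ := (Γ.map Formula.names).sup

/-- The subformula occurrences of a sequent. -/
def seqSubs (Γ : Sequent) : Multiset Formula :=
  Γ.bind (fun A => (A.subs : Multiset Formula))

/-- `A` is a subformula occurrence of `Γ`. -/
def HasSub (Γ : Sequent) (A : Formula) : Prop := A ∈ seqSubs Γ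

/-- `a` is the name of a `⊥`-occurrence of `Γ`. -/
def IsBotName (Γ : Sequent) (a : ℕ) : Prop := HasSub Γ (.bot a)

/-- `a` is the name of a `1`-occurrence of `Γ`. -/
def IsOneName (Γ : Sequent) (a : ℕ) : Prop := HasSub Γ (.one a)

/-- The sequent is well-named: all occurrences carry pairwise distinct names. -/
def WellNamed (Γ : Sequent) : Prop := ((seqSubs Γ).map Formula.name).Nodup

/-- A linking: a function assigning to (the name of) each `⊥`-occurrence
a target name (the jump). -/
abbrev Linking := ℕ → ℕ

/-- A switching: a choice of left/right for each par occurrence. -/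
abbrev Switching := ℕ → Bool

/-- The linking sends (names of) `⊥`-occurrences to names of `Γ`. -/
def ValidLinking (Γ : Sequent) (lk : Linking) : Prop :=
  ∀ a, IsBotName Γ a → lk a ∈ seqNames Γ

/-- The edges of the switching graph for `Γ`, `lk` and the switching `σ`. -/
def switchAdj (Γ : Sequent) (lk : Linking) (σ : Switching) (x y : ℕ) : Prop :=
  (∃ A B, HasSub Γ (.tens x A B) ∧ (y = A.name ∨ y = B.name)) ∨
  (∃ A B, HasSub Γ (.parr x A B) ∧ y = (if σ x then A.name else B.name)) ∨
  (IsBotName Γ x ∧ y = lk x)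

/-- The switching graph for `Γ`, `lk` and `σ`. -/
def switchGraph (Γ : Sequent) (lk : Linking) (σ : Switching) : SimpleGraph ℕ :=
  SimpleGraph.fromRel (switchAdj Γ lk σ)

/-- Correctness of a linking: every switching graph (restricted to the names of `Γ`)
is acyclic and connected, i.e. a tree.  `(Γ, lk)` is a proof net iff `Correct Γ lk`. -/
def Correct (Γ : Sequent) (lk : Linking) : Prop :=
  ValidLinking Γ lk ∧
  ∀ σ : Switching, ((switchGraph Γ lk σ).induce {x : ℕ | x ∈ seqNames Γ}).IsTree

/-- All jumps of the linking target `1`-occurrences. -/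
def TargetsOnes (Γ : Sequent) (lk : Linking) : Prop :=
  ∀ a, IsBotName Γ a → IsOneName Γ (lk a)

/-- Two correct linkings describe the same proof net (they agree on all jumps). -/
def SameNet (Γ : Sequent) (lk lk' : Linking) : Prop :=
  Correct Γ lk ∧ Correct Γ lk' ∧ ∀ a, IsBotName Γ a → lk a = lk' a

/-- A rewiring step between proof nets: the target of exactly one jump is changed. -/
def Rewire (Γ : Sequent) (lk lk' : Linking) : Prop :=
  Correct Γ lk ∧ Correct Γ lk' ∧
  ∃ a, IsBotName Γ a ∧ lk a ≠ lk' a ∧ ∀ b, IsBotName Γ b → b ≠ a → lk b = lk' b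

/-- Equivalence of proof nets over `Γ`: the equivalence relation generated by rewiring. -/
def NetEquiv (Γ : Sequent) : Linking → Linking → Prop :=
  Relation.EqvGen (fun lk lk' => SameNet Γ lk lk' ∨ Rewire Γ lk lk')

end MLL

/-!
Rewiring the jump of a `⊥` named `x` from `t` to `t'` replaces the edge `x – t` of every
switching graph by `x – t'`; the result is again a tree as soon as `t'` is still reachable from
`t` once `x – t` is removed. Hence three jumps `x, y, z` can be rotated
(`x ↦ λ(y)`, `y ↦ λ(z)`, `z ↦ λ(x)`, redirecting `y`, then `z`, then `x`) whenever, with these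
three jumps removed, every switching graph still connects `x` to `y` and `λ(y)` to `z`.

The double exchange is the rotation of the jumps of `a, b, d` followed by the rotation of the
jumps of `d, c, b`. The first one uses the segments `a ⋯ b` and `λ(b) ⋯ λ(c) – c ⋯ d` of the
given path, the second one the segments `d ⋯ c` and `λ(c) ⋯ λ(b) – a ⋯ b`, where the jump
`a – λ(b)` was created by the first rotation.
-/

namespace SimpleGraph

variable {V : Type*} {G T : SimpleGraph V} {s : Set V} {u v x t t' : V}

theorem Reachable.deleteEdges_or (h : G.Reachable v x) :
    (G.deleteEdges {s(x, t)}).Reachable v x ∨ (G.deleteEdges {s(x, t)}).Reachable v t := by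
  obtain ⟨p⟩ := h
  induction p with
  | nil => exact .inl .rfl
  | @cons v w x h p ih =>
    by_cases he : s(v, w) = s(x, t)
    · rcases Sym2.eq_iff.1 he with ⟨hv, -⟩ | ⟨hv, -⟩
      exacts [.inl (hv ▸ .rfl), .inr (hv ▸ .rfl)]
    · have hadj : (G.deleteEdges {s(x, t)}).Adj v w := by simpa [he] using h
      exact ih.imp hadj.reachable.trans hadj.reachable.trans

theorem IsTree.deleteEdges_sup_edge (hT : T.IsTree) (ht : T.Adj x t)
    (hreach : (T.deleteEdges {s(x, t)}).Reachable t t') :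
    (T.deleteEdges {s(x, t)} ⊔ edge x t').IsTree := by
  have hxt : ¬ (T.deleteEdges {s(x, t)}).Reachable x t :=
    isBridge_iff.1 (isAcyclic_iff_forall_adj_isBridge.1 hT.isAcyclic ht)
  have hxt' : (T.deleteEdges {s(x, t)} ⊔ edge x t').Adj t' x := by
    simp only [sup_adj, adj_edge]
    exact .inr ⟨Sym2.eq_swap, fun h => hxt (by subst h; exact hreach.symm)⟩
  refine ⟨(connected_iff_exists_forall_reachable _).2 ⟨x, fun v => ?_⟩, ?_⟩
  · rcases (hT.connected.preconnected v x).deleteEdges_or (t := t) with h | h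
    · exact (h.mono le_sup_left).symm
    · exact ((h.trans hreach).mono le_sup_left |>.trans hxt'.reachable).symm
  · exact (hT.isAcyclic.anti (deleteEdges_le _)).sup_edge_of_not_reachable
      fun h => hxt (h.trans hreach.symm)

theorem Reachable.induce (hs : ∀ a b, G.Adj a b → b ∈ s) (h : G.Reachable u v) (hu : u ∈ s)
    (hv : v ∈ s) : (G.induce s).Reachable ⟨u, hu⟩ ⟨v, hv⟩ := by
  obtain ⟨p⟩ := h
  have hsupp : ∀ a ∈ p.support, a ∈ s := by
    clear hv
    induction p with
    | nil => simpa using hu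
    | cons h p ih => simpa [hu] using ih (hs _ _ h)
  exact ⟨p.induce s hsupp⟩

theorem induce_deleteEdges (hx : x ∈ s) (ht : t ∈ s) :
    (G.deleteEdges {s(x, t)}).induce s = (G.induce s).deleteEdges {s(⟨x, hx⟩, ⟨t, ht⟩)} := by
  ext ⟨a, ha⟩ ⟨b, hb⟩
  simp

theorem induce_sup_edge (hx : x ∈ s) (ht : t ∈ s) :
    (G ⊔ edge x t).induce s = G.induce s ⊔ edge ⟨x, hx⟩ ⟨t, ht⟩ := by
  ext ⟨a, ha⟩ ⟨b, hb⟩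
  simp [edge_adj]

end SimpleGraph

namespace MLL

open SimpleGraph Function

theorem Formula.name_mem_names (A : Formula) : A.name ∈ A.names := by
  cases A <;> simp [Formula.name, Formula.names]

theorem Formula.names_subset_of_mem_subs {A B : Formula} (h : A ∈ B.subs) :
    A.names ⊆ B.names := by
  induction B with
  | one n | bot n => simp_all [Formula.subs]
  | parr n l r ihl ihr | tens n l r ihl ihr =>
    simp only [Formula.subs, List.mem_cons, List.mem_append] at h
    rcases h with rfl | h | h
    · rfl
    · exact (ihl h).trans (Finset.subset_union_left.trans (Finset.subset_insert _ _))
    · exact (ihr h).trans (Finset.subset_union_right.trans (Finset.subset_insert _ _))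

variable {Γ : Sequent} {lk lk' : Linking} {σ : Switching} {u v x y z t : ℕ}

theorem names_subset_seqNames {A : Formula} (h : HasSub Γ A) : A.names ⊆ seqNames Γ := by
  obtain ⟨C, hC, hAC⟩ := Multiset.mem_bind.1 h
  exact (Formula.names_subset_of_mem_subs (by simpa using hAC)).trans
    (Multiset.le_sup (Multiset.mem_map_of_mem _ hC))

theorem name_mem_seqNames {A : Formula} (h : HasSub Γ A) : A.name ∈ seqNames Γ :=
  names_subset_seqNames h A.name_mem_names

theorem WellNamed.eq_of_name_eq (hW : WellNamed Γ) {A B : Formula} (hA : HasSub Γ A)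
    (hB : HasSub Γ B) (h : A.name = B.name) : A = B :=
  Multiset.inj_on_of_nodup_map hW A hA B hB h

theorem WellNamed.bot_ne_one (hW : WellNamed Γ) (hx : IsBotName Γ x) (ht : IsOneName Γ t) :
    x ≠ t := by
  rintro rfl
  cases hW.eq_of_name_eq hx ht rfl

theorem mem_seqNames_of_switchAdj (hV : ValidLinking Γ lk) (h : switchAdj Γ lk σ u v) :
    u ∈ seqNames Γ ∧ v ∈ seqNames Γ := by
  rcases h with ⟨A, B, hs, hv⟩ | ⟨A, B, hs, rfl⟩ | ⟨hu, rfl⟩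
  · refine ⟨names_subset_seqNames hs (by simp [Formula.names]), names_subset_seqNames hs ?_⟩
    rcases hv with rfl | rfl <;> simp [Formula.names, Formula.name_mem_names]
  · refine ⟨names_subset_seqNames hs (by simp [Formula.names]), names_subset_seqNames hs ?_⟩
    split <;> simp [Formula.names, Formula.name_mem_names]
  · exact ⟨name_mem_seqNames hu, hV u hu⟩

theorem mem_seqNames_of_adj (hV : ValidLinking Γ lk) (h : (switchGraph Γ lk σ).Adj u v) :
    v ∈ seqNames Γ :=
  h.2.elim (mem_seqNames_of_switchAdj hV · |>.2) (mem_seqNames_of_switchAdj hV · |>.1)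

theorem switchGraph_adj_bot_one_iff (hW : WellNamed Γ) (hx : IsBotName Γ x)
    (ht : IsOneName Γ t) : (switchGraph Γ lk σ).Adj x t ↔ lk x = t := by
  refine ⟨fun h => ?_, fun h => ⟨hW.bot_ne_one hx ht, .inl (.inr (.inr ⟨hx, h.symm⟩))⟩⟩
  rcases h.2 with (⟨A, B, hs, -⟩ | ⟨A, B, hs, -⟩ | ⟨-, h⟩) |
    (⟨A, B, hs, -⟩ | ⟨A, B, hs, -⟩ | ⟨hs, -⟩)
  all_goals first
    | exact h.symm
    | cases hW.eq_of_name_eq hs hx rfl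
    | cases hW.eq_of_name_eq hs ht rfl

theorem switchAdj_update (h : u = x → v ≠ t ∧ v ≠ lk x) :
    switchAdj Γ (update lk x t) σ u v ↔ switchAdj Γ lk σ u v := by
  by_cases hu : u = x
  · subst hu
    simp [switchAdj, h rfl]
  · simp [switchAdj, hu]

theorem switchGraph_update_adj_of_ne (h₁ : s(u, v) ≠ s(x, t)) (h₂ : s(u, v) ≠ s(x, lk x)) :
    (switchGraph Γ (update lk x t) σ).Adj u v ↔ (switchGraph Γ lk σ).Adj u v := by
  simp only [switchGraph, fromRel_adj]
  rw [switchAdj_update, switchAdj_update]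
  · rintro rfl
    exact ⟨fun h => h₁ (by rw [h, Sym2.eq_swap]), fun h => h₂ (by rw [h, Sym2.eq_swap])⟩
  · rintro rfl
    exact ⟨fun h => h₁ (by rw [h]), fun h => h₂ (by rw [h])⟩

theorem switchGraph_update (hW : WellNamed Γ) (hx : IsBotName Γ x) (hX : IsOneName Γ (lk x))
    (ht : IsOneName Γ t) :
    switchGraph Γ (update lk x t) σ = (switchGraph Γ lk σ).deleteEdges {s(x, lk x)} ⊔ edge x t := by
  ext u v
  simp only [sup_adj, deleteEdges_adj, Set.mem_singleton_iff, adj_edge]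
  by_cases h₁ : s(u, v) = s(x, t)
  · have hadj : (switchGraph Γ (update lk x t) σ).Adj u v := by
      rw [← mem_edgeSet, h₁, mem_edgeSet, switchGraph_adj_bot_one_iff hW hx ht, update_self]
    exact iff_of_true hadj (.inr ⟨h₁.symm, hadj.ne⟩)
  by_cases h₂ : s(u, v) = s(x, lk x)
  · refine iff_of_false ?_ (by tauto)
    rw [← mem_edgeSet, h₂, mem_edgeSet, switchGraph_adj_bot_one_iff hW hx hX, update_self]
    exact fun h => h₁ (h₂.trans (by rw [h]))
  · rw [switchGraph_update_adj_of_ne h₁ h₂]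
    simp [h₂, Ne.symm h₁]

theorem ValidLinking.update (hV : ValidLinking Γ lk) (ht : t ∈ seqNames Γ) :
    ValidLinking Γ (update lk x t) := by
  intro y hy
  rcases eq_or_ne y x with rfl | h
  · simpa
  · simpa [h] using hV y hy

theorem TargetsOnes.update (hT : TargetsOnes Γ lk) (ht : IsOneName Γ t) :
    TargetsOnes Γ (update lk x t) := by
  intro y hy
  rcases eq_or_ne y x with rfl | h
  · simpa
  · simpa [h] using hT y hy

theorem Correct.update (hW : WellNamed Γ) (hC : Correct Γ lk) (hx : IsBotName Γ x)
    (hX : IsOneName Γ (lk x)) (ht : IsOneName Γ t)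
    (hreach : ∀ σ, ((switchGraph Γ lk σ).deleteEdges {s(x, lk x)}).Reachable (lk x) t) :
    Correct Γ (update lk x t) := by
  have htS : t ∈ {a | a ∈ seqNames Γ} := name_mem_seqNames ht
  have hxS : x ∈ {a | a ∈ seqNames Γ} := name_mem_seqNames hx
  have hXS : lk x ∈ {a | a ∈ seqNames Γ} := name_mem_seqNames hX
  refine ⟨hC.1.update htS, fun σ => ?_⟩
  rw [switchGraph_update hW hx hX ht, induce_sup_edge hxS htS, induce_deleteEdges hxS hXS]
  refine (hC.2 σ).deleteEdges_sup_edge ?_ ?_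
  · simpa using (switchGraph_adj_bot_one_iff hW hx hX).2 rfl
  · rw [← induce_deleteEdges]
    exact (hreach σ).induce (fun _ _ h => mem_seqNames_of_adj hC.1 (deleteEdges_le _ h)) hXS htS

theorem rewire_update (hW : WellNamed Γ) (hC : Correct Γ lk) (hx : IsBotName Γ x)
    (hX : IsOneName Γ (lk x)) (ht : IsOneName Γ t) (hne : lk x ≠ t)
    (hreach : ∀ σ, ((switchGraph Γ lk σ).deleteEdges {s(x, lk x)}).Reachable (lk x) t) :
    Rewire Γ lk (update lk x t) :=
  ⟨hC, hC.update hW hx hX ht hreach, x, hx, by simpa using hne,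
    fun _ _ hy => (update_of_ne hy _ _).symm⟩

theorem Correct.of_transGen_rewire (h : Relation.TransGen (Rewire Γ) lk lk') :
    Correct Γ lk' := by
  induction h with
  | single h => exact h.2.1
  | tail _ h _ => exact h.2.1

theorem NetEquiv.of_transGen_rewire (h : Relation.TransGen (Rewire Γ) lk lk') :
    NetEquiv Γ lk lk' :=
  Relation.EqvGen.mono (fun _ _ => Or.inr) _ _ (Relation.EqvGen.transGen_le_eqvGen _ _ _ h)

def jumpEdges (lk : Linking) (S : Set ℕ) : Set (Sym2 ℕ) := (fun y => s(y, lk y)) '' S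

theorem jumpEdges_mono {S S' : Set ℕ} (h : S ⊆ S') : jumpEdges lk S ⊆ jumpEdges lk S' :=
  Set.image_mono h

@[simp]
theorem jumpEdges_singleton : jumpEdges lk {x} = {s(x, lk x)} :=
  Set.image_singleton

theorem switchAdj_of_notMem_jumpEdges {S : Set ℕ}
    (hagree : ∀ y, IsBotName Γ y → y ∉ S → lk y = lk' y) (h : switchAdj Γ lk σ u v)
    (huv : s(u, v) ∉ jumpEdges lk S) : switchAdj Γ lk' σ u v := by
  rcases h with h | h | ⟨hu, rfl⟩
  · exact .inl h
  · exact .inr (.inl h)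
  · have huS : u ∉ S := fun huS => huv ⟨u, huS, rfl⟩
    exact .inr (.inr ⟨hu, hagree u hu huS⟩)

theorem deleteEdges_jumpEdges_le (hW : WellNamed Γ) (hT' : TargetsOnes Γ lk') {S S' : Set ℕ}
    (hS' : ∀ y ∈ S', IsBotName Γ y) (hSS' : S ⊆ S')
    (hagree : ∀ y, IsBotName Γ y → y ∉ S' → lk y = lk' y) :
    (switchGraph Γ lk σ).deleteEdges (jumpEdges lk S') ≤
      (switchGraph Γ lk' σ).deleteEdges (jumpEdges lk' S) := by
  refine le_trans (fun u v huv => ?_) (deleteEdges_anti (jumpEdges_mono hSS'))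
  rw [deleteEdges_adj] at huv ⊢
  obtain ⟨⟨huv, h⟩, hJ⟩ := huv
  refine ⟨⟨huv, h.imp (switchAdj_of_notMem_jumpEdges hagree · hJ)
    (switchAdj_of_notMem_jumpEdges hagree · (by rwa [Sym2.eq_swap]))⟩, ?_⟩
  rintro ⟨y, hy, he : s(y, lk' y) = s(u, v)⟩
  have hadj : (switchGraph Γ lk σ).Adj y (lk' y) := by
    rw [← mem_edgeSet, he, mem_edgeSet]
    exact ⟨huv, h⟩
  rw [switchGraph_adj_bot_one_iff hW (hS' y hy) (hT' y (hS' y hy))] at hadj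
  exact hJ ⟨y, hy, show s(y, lk y) = s(u, v) by rw [hadj, he]⟩

theorem deleteEdges_jumpEdges_le_jump (hW : WellNamed Γ) (hT' : TargetsOnes Γ lk') {S : Set ℕ}
    (hS : ∀ y ∈ S, IsBotName Γ y) (hx : x ∈ S)
    (hagree : ∀ y, IsBotName Γ y → y ∉ S → lk y = lk' y) :
    (switchGraph Γ lk σ).deleteEdges (jumpEdges lk S) ≤
      (switchGraph Γ lk' σ).deleteEdges {s(x, lk' x)} := by
  simpa using deleteEdges_jumpEdges_le hW hT' hS (Set.singleton_subset_iff.2 hx) hagree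

theorem adj_deleteEdges_jumpEdges (hW : WellNamed Γ) (hT : TargetsOnes Γ lk) {S : Set ℕ}
    (hS : ∀ w ∈ S, IsBotName Γ w) (hy : IsBotName Γ y) (hyS : y ∉ S) :
    ((switchGraph Γ lk σ).deleteEdges (jumpEdges lk S)).Adj y (lk y) := by
  rw [deleteEdges_adj]
  refine ⟨(switchGraph_adj_bot_one_iff hW hy (hT y hy)).2 rfl, ?_⟩
  rintro ⟨w, hw, he⟩
  rcases Sym2.eq_iff.1 he with ⟨rfl, -⟩ | ⟨rfl, -⟩
  exacts [hyS hw, hW.bot_ne_one (hS _ hw) (hT y hy) rfl]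

theorem reachable_deleteEdges_jumpEdges {S : Set ℕ} {G : SimpleGraph ℕ}
    (p : G.Walk u v) (hp : ∀ y ∈ S, y ∉ p.support ∨ lk y ∉ p.support) :
    (G.deleteEdges (jumpEdges lk S)).Reachable u v :=
  ⟨p.toDeleteEdges _ fun _ he ⟨y, hy, hye⟩ => (hp y hy).elim
    (· (p.fst_mem_support_of_mem_edges (hye ▸ he)))
    (· (p.snd_mem_support_of_mem_edges (hye ▸ he)))⟩

theorem adj_deleteEdges_jump (hW : WellNamed Γ) (hT : TargetsOnes Γ lk) (hy : IsBotName Γ y)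
    (hx : IsBotName Γ x) (hyx : y ≠ x) :
    ((switchGraph Γ lk σ).deleteEdges {s(x, lk x)}).Adj y (lk y) := by
  simpa using adj_deleteEdges_jumpEdges hW hT (S := {x}) (by simpa using hx) hy (by simpa using hyx)

theorem transGen_rewire_rotate (hW : WellNamed Γ) (hC : Correct Γ lk) (hT : TargetsOnes Γ lk)
    (hx : IsBotName Γ x) (hy : IsBotName Γ y) (hz : IsBotName Γ z)
    (hxyz : [x, y, z].Nodup) (hXYZ : [lk x, lk y, lk z].Nodup)
    (hreach : ∀ σ,
      ((switchGraph Γ lk σ).deleteEdges (jumpEdges lk {x, y, z})).Reachable x y ∧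
      ((switchGraph Γ lk σ).deleteEdges (jumpEdges lk {x, y, z})).Reachable (lk y) z) :
    Relation.TransGen (Rewire Γ) lk (update (update (update lk y (lk z)) z (lk x)) x (lk y)) := by
  simp only [List.nodup_cons, List.mem_cons, List.not_mem_nil, not_or, not_false_eq_true,
    List.nodup_nil, and_true] at hxyz hXYZ
  obtain ⟨⟨hxy, hxz⟩, hyz⟩ := hxyz
  obtain ⟨⟨hXY, hXZ⟩, hYZ⟩ := hXYZ
  have hS : ∀ w ∈ ({x, y, z} : Set ℕ), IsBotName Γ w := by simp [hx, hy, hz]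
  have R₁ : Rewire Γ lk (update lk y (lk z)) :=
    rewire_update hW hC hy (hT y hy) (hT z hz) hYZ fun σ =>
      ((hreach σ).2.mono (deleteEdges_jumpEdges_le_jump hW hT hS (by simp) fun _ _ _ => rfl)).trans
        (adj_deleteEdges_jump hW hT hz hy (Ne.symm hyz)).reachable
  have T₁ : TargetsOnes Γ (update lk y (lk z)) := hT.update (hT z hz)
  have R₂ : Rewire Γ (update lk y (lk z)) (update (update lk y (lk z)) z (lk x)) := by
    have hz₁ : update lk y (lk z) z = lk z := update_of_ne (Ne.symm hyz) ..
    refine rewire_update hW R₁.2.1 hz (T₁ z hz) (hT x hx) (by rw [hz₁]; exact Ne.symm hXZ)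
      fun σ => ?_
    have hjy := (adj_deleteEdges_jump hW T₁ hy hz hyz (σ := σ)).reachable
    have hjx := (adj_deleteEdges_jump hW T₁ hx hz hxz (σ := σ)).reachable
    have hxy' := (hreach σ).1.mono
      (deleteEdges_jumpEdges_le_jump hW T₁ hS (x := z) (by simp) fun w _ hw => by
        simp_all [update_apply])
    rw [update_self] at hjy
    rw [update_of_ne hxy] at hjx
    rw [hz₁] at hjy hjx hxy' ⊢
    exact hjy.symm.trans (hxy'.symm.trans hjx)
  have T₂ : TargetsOnes Γ (update (update lk y (lk z)) z (lk x)) := T₁.update (hT x hx)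
  have R₃ : Rewire Γ (update (update lk y (lk z)) z (lk x))
      (update (update (update lk y (lk z)) z (lk x)) x (lk y)) := by
    have hx₂ : update (update lk y (lk z)) z (lk x) x = lk x := by simp [hxy, hxz]
    refine rewire_update hW R₂.2.1 hx (T₂ x hx) (hT y hy) (by rw [hx₂]; exact hXY) fun σ => ?_
    have hjz := (adj_deleteEdges_jump hW T₂ hz hx (Ne.symm hxz) (σ := σ)).reachable
    have hyz' := (hreach σ).2.mono
      (deleteEdges_jumpEdges_le_jump hW T₂ hS (x := x) (by simp) fun w _ hw => by simp_all)
    rw [update_self] at hjz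
    rw [hx₂] at hjz hyz' ⊢
    exact hjz.symm.trans hyz'.symm
  exact .tail (.tail (.single R₁) R₂) R₃

section ExchangePath

variable {G : SimpleGraph ℕ} {a b c d : ℕ} {h₁ : G.Adj (lk a) a} {p₁ : G.Walk a b}
  {h₂ : G.Adj b (lk b)} {p₂ : G.Walk (lk b) (lk c)} {h₃ : G.Adj (lk c) c} {p₃ : G.Walk c d}
  {h₄ : G.Adj d (lk d)}

theorem nodup_of_isPath_exchange
    (hP : (Walk.cons h₁ (p₁.append (Walk.cons h₂ (p₂.append (Walk.cons h₃
      (p₃.append (Walk.cons h₄ Walk.nil))))))).IsPath) :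
    [a, b, c, d].Nodup ∧ [lk a, lk b, lk d].Nodup ∧ [lk a, lk c, lk d].Nodup := by
  have hs := hP.support_nodup
  simp only [Walk.support_cons, Walk.support_append, Walk.support_nil, List.tail_cons,
    List.nodup_cons, List.nodup_append, List.mem_append, List.mem_cons, List.not_mem_nil] at hs
  simp only [List.nodup_cons, List.mem_cons, List.not_mem_nil, not_or, not_false_eq_true,
    List.nodup_nil, and_true]
  grind [Walk.start_mem_support, Walk.end_mem_support]

-- `p₁` and `p₃` miss the targets of the four jumps, `p₂` misses their sources.
theorem reachable_of_isPath_exchange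
    (hP : (Walk.cons h₁ (p₁.append (Walk.cons h₂ (p₂.append (Walk.cons h₃
      (p₃.append (Walk.cons h₄ Walk.nil))))))).IsPath) :
    (G.deleteEdges (jumpEdges lk {a, b, c, d})).Reachable a b ∧
      (G.deleteEdges (jumpEdges lk {a, b, c, d})).Reachable (lk b) (lk c) ∧
      (G.deleteEdges (jumpEdges lk {a, b, c, d})).Reachable c d := by
  have hs := hP.support_nodup
  simp only [Walk.support_cons, Walk.support_append, Walk.support_nil, List.tail_cons,
    List.nodup_cons, List.nodup_append, List.mem_append, List.mem_cons, List.not_mem_nil] at hs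
  refine ⟨reachable_deleteEdges_jumpEdges p₁ fun y hy => .inr ?_,
    reachable_deleteEdges_jumpEdges p₂ fun y hy => .inl ?_,
    reachable_deleteEdges_jumpEdges p₃ fun y hy => .inr ?_⟩ <;>
  · simp only [Set.mem_insert_iff, Set.mem_singleton_iff] at hy
    grind [Walk.start_mem_support, Walk.end_mem_support]

end ExchangePath

theorem transGen_rewire_double_exchange (hW : WellNamed Γ) (hC : Correct Γ lk)
    (hT : TargetsOnes Γ lk) {a b c d : ℕ} (ha : IsBotName Γ a) (hb : IsBotName Γ b)
    (hc : IsBotName Γ c) (hd : IsBotName Γ d) (habcd : [a, b, c, d].Nodup)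
    (hABD : [lk a, lk b, lk d].Nodup) (hACD : [lk a, lk c, lk d].Nodup)
    (hreach : ∀ σ,
      ((switchGraph Γ lk σ).deleteEdges (jumpEdges lk {a, b, c, d})).Reachable a b ∧
      ((switchGraph Γ lk σ).deleteEdges (jumpEdges lk {a, b, c, d})).Reachable (lk b) (lk c) ∧
      ((switchGraph Γ lk σ).deleteEdges (jumpEdges lk {a, b, c, d})).Reachable c d) :
    Relation.TransGen (Rewire Γ) lk (fun x =>
      if x = a then lk b else if x = b then lk a else
      if x = c then lk d else if x = d then lk c else lk x) := by
  simp only [List.nodup_cons, List.mem_cons, List.not_mem_nil, not_or, not_false_eq_true,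
    List.nodup_nil, and_true] at habcd hABD hACD
  obtain ⟨⟨hab, hac, had⟩, ⟨hbc, hbd⟩, hcd⟩ := habcd
  have hS : ∀ y ∈ ({a, b, c, d} : Set ℕ), IsBotName Γ y := by simp [ha, hb, hc, hd]
  have rot₁ := transGen_rewire_rotate hW hC hT ha hb hd (by simp [*]) (by simp [*]) fun σ =>
    have hle := deleteEdges_jumpEdges_le hW hT (σ := σ) (S := {a, b, d}) hS (by grind)
      fun _ _ _ => rfl
    have hjc := adj_deleteEdges_jumpEdges hW hT (σ := σ) (S := {a, b, d})
      (by simp [ha, hb, hd]) hc (by simp [*, Ne.symm])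
    ⟨(hreach σ).1.mono hle,
      ((hreach σ).2.1.mono hle).trans (hjc.reachable.symm.trans ((hreach σ).2.2.mono hle))⟩
  set lk' := update (update (update lk b (lk d)) d (lk a)) a (lk b)
  have hT' : TargetsOnes Γ lk' := ((hT.update (hT d hd)).update (hT a ha)).update (hT b hb)
  have rot₂ := transGen_rewire_rotate hW (Correct.of_transGen_rewire rot₁) hT' hd hc hb
    (by simp [*, Ne.symm]) (by simp [lk', *, Ne.symm]) fun σ =>
    have hle := deleteEdges_jumpEdges_le hW hT' (σ := σ) (S := {d, c, b}) hS (by grind)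
      fun y _ hy => by simp_all [lk']
    have hja := (adj_deleteEdges_jumpEdges hW hT' (σ := σ) (S := {d, c, b})
      (by simp [hb, hc, hd]) ha (by simp [*])).reachable
    ⟨((hreach σ).2.2.mono hle).symm, by
      have hc' : lk' c = lk c := by simp [lk', hcd, Ne.symm hac, Ne.symm hbc]
      simp only [lk', update_self] at hja
      rw [hc']
      exact ((hreach σ).2.1.mono hle).symm.trans (hja.symm.trans ((hreach σ).1.mono hle))⟩
  convert rot₁.trans rot₂ using 2
  simp only [lk', update_apply]
  split_ifs <;> simp_all

end MLL

open MLL SimpleGraph in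
/-- Double exchange of jumps (Lemma 4.16 of the paper).  If every
switching graph of the proof net `(Γ, λ)` contains a path of the form
`λ(a) –jump– a – ⋯ – b –jump– λ(b) – ⋯ – λ(c) –jump– c – ⋯ – d –jump– λ(d)`,
then `λ` is equivalent to the linking obtained by simultaneously swapping the
targets of `a` and `b` and the targets of `c` and `d`. -/
theorem mll_double_exchange {Γ : Sequent} (hW : WellNamed Γ)
    (lk : Linking) (hC : Correct Γ lk) (hOnes : TargetsOnes Γ lk)
    {a b c d : ℕ} (ha : IsBotName Γ a) (hb : IsBotName Γ b)
    (hc : IsBotName Γ c) (hd : IsBotName Γ d)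
    (hpath : ∀ σ : Switching,
      ∃ (h₁ : (switchGraph Γ lk σ).Adj (lk a) a)
        (p₁ : (switchGraph Γ lk σ).Walk a b)
        (h₂ : (switchGraph Γ lk σ).Adj b (lk b))
        (p₂ : (switchGraph Γ lk σ).Walk (lk b) (lk c))
        (h₃ : (switchGraph Γ lk σ).Adj (lk c) c)
        (p₃ : (switchGraph Γ lk σ).Walk c d)
        (h₄ : (switchGraph Γ lk σ).Adj d (lk d)),
        (Walk.cons h₁ (p₁.append (Walk.cons h₂ (p₂.append (Walk.cons h₃
          (p₃.append (Walk.cons h₄ Walk.nil))))))).IsPath) :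
    NetEquiv Γ lk (fun x =>
      if x = a then lk b else if x = b then lk a else
      if x = c then lk d else if x = d then lk c else lk x) := by
  have hnodup := let ⟨_, _, _, _, _, _, _, hP⟩ := hpath default; nodup_of_isPath_exchange hP
  refine NetEquiv.of_transGen_rewire <| transGen_rewire_double_exchange hW hC hOnes ha hb hc hd
    hnodup.1 hnodup.2.1 hnodup.2.2 fun σ => ?_
  obtain ⟨_, _, _, _, _, _, _, hP⟩ := hpath σ
  exact reachable_of_isPath_exchange hP
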